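/- Let f : D → ℝ^n be a continuous mapping that is differentiable almost everywhere in D and possesses the N^{-1}-property. Then J(x,f) ≠ 0 for almost every x ∈ D. -/

import Mathlib

open MeasureTheory Set
open scoped ENNReal NNReal Topology

noncomputable section

/-- `ℝⁿ` as Euclidean space. -/
abbrev Eucl (n : ℕ) := EuclideanSpace ℝ (Fin n)

/-- Jacobian determinant `J(x,f)` (equal to `0` where `f` is not differentiable). -/
def jacDet {n : ℕ} (f : Eucl n → Eucl n) (x : Eucl n) : ℝ :=
  LinearMap.det (fderiv ℝ f x : Eucl n →ₗ[ℝ] Eucl n)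

/-- Lusin's `N⁻¹`-property on `D`. -/
def LusinNInv {n : ℕ} (f : Eucl n → Eucl n) (D : Set (Eucl n)) : Prop :=
  ∀ S : Set (Eucl n), volume S = 0 → volume (D ∩ f ⁻¹' S) = 0

/-! The set where `f` is differentiable with vanishing Jacobian has a null image (the easy half of
Sard's theorem), so by the `N⁻¹`-property it is itself null. -/

theorem addHaar_image_setOf_det_fderiv_eq_zero {E : Type*} [NormedAddCommGroup E]
    [NormedSpace ℝ E] [FiniteDimensional ℝ E] [MeasurableSpace E] [BorelSpace E]
    (μ : Measure E) [μ.IsAddHaarMeasure] (f : E → E) :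
    μ (f '' {x | DifferentiableAt ℝ f x ∧ LinearMap.det (fderiv ℝ f x : E →ₗ[ℝ] E) = 0}) = 0 :=
  addHaar_image_eq_zero_of_det_fderivWithin_eq_zero μ
    (fun _ hx => hx.1.hasFDerivAt.hasFDerivWithinAt) fun _ hx => hx.2

theorem ae_restrict_notMem_of_measure_image_eq_zero {α β : Type*} [MeasurableSpace α]
    [MeasurableSpace β] {μ : Measure α} {ν : Measure β} {f : α → β} {D Z : Set α}
    (hD : MeasurableSet D) (hf : ∀ S, ν S = 0 → μ (D ∩ f ⁻¹' S) = 0) (hZ : ν (f '' Z) = 0) :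
    ∀ᵐ x ∂μ.restrict D, x ∉ Z := by
  have hsub : Z ∩ D ⊆ D ∩ f ⁻¹' (f '' Z) := fun x hx => ⟨hx.2, mem_image_of_mem f hx.1⟩
  exact measure_eq_zero_iff_ae_notMem.mp <|
    (Measure.restrict_apply_eq_zero' hD).mpr (measure_mono_null hsub (hf _ hZ))

theorem jacobian_nonzero_ae_of_NInv_general
    (n : ℕ)
    (D : Set (Eucl n)) (hDopen : IsOpen D)
    (f : Eucl n → Eucl n)
    (hdiff : ∀ᵐ x ∂(volume.restrict D), DifferentiableAt ℝ f x)
    (hfNinv : LusinNInv f D) :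
    ∀ᵐ x ∂(volume.restrict D), jacDet f x ≠ 0 := by
  have hcritical := ae_restrict_notMem_of_measure_image_eq_zero hDopen.measurableSet hfNinv
    (addHaar_image_setOf_det_fderiv_eq_zero volume f)
  filter_upwards [hdiff, hcritical] with x hx hxZ h0 using hxZ ⟨hx, h0⟩

/-- **Proposition (nonvanishing of the Jacobian).**
Let `f : D → ℝⁿ` be a continuous mapping which is differentiable a.e. in `D`
and possesses the `N⁻¹`-property.  Then `J(x,f) ≠ 0` for a.e. `x ∈ D`. -/
theorem jacobian_nonzero_ae_of_NInv
    (n : ℕ) (hn : 2 ≤ n)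
    (D : Set (Eucl n)) (hDopen : IsOpen D) (hDconn : IsConnected D)
    (f : Eucl n → Eucl n) (hfcont : ContinuousOn f D)
    (hdiff : ∀ᵐ x ∂(volume.restrict D), DifferentiableAt ℝ f x)
    (hfNinv : LusinNInv f D) :
    ∀ᵐ x ∂(volume.restrict D), jacDet f x ≠ 0 :=
  jacobian_nonzero_ae_of_NInv_general n D hDopen f hdiff hfNinv
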